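/- arXiv:2506.03080 — 2 statements merged into one kernel-verified Lean document; each statement's English description precedes it below -/
import Mathlib

section
/- For every k-graph F, integer t ≥ 1, the Turán density of the t-blow-up of F equals the Turán density of F: π(B(F,t)) = π(F). -/
open Finset Filter Topology

/-- A hypergraph: a finite vertex type together with a finite set of edges
(each edge a finite set of vertices). -/
structure HGraph where
  V : Type
  [fin : Fintype V]
  [dec : DecidableEq V]
  edges : Finset (Finset V)

attribute [instance] HGraph.fin HGraph.dec

/-- `H` is `k`-uniform if every edge has exactly `k` vertices. -/
def HGraph.IsUniform (k : ℕ) (H : HGraph) : Prop := ∀ e ∈ H.edges, e.card = k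

/-- `f` is a copy (embedding) of `F` into `H`. -/
def IsCopy (F H : HGraph) (f : F.V → H.V) : Prop :=
  Function.Injective f ∧ ∀ e ∈ F.edges, e.image f ∈ H.edges

/-- `H` contains a copy of `F`. -/
def HasCopy (F H : HGraph) : Prop := ∃ f, IsCopy F H f

/-- `f` is a homomorphism from `F` to `H`: every edge maps to an edge,
with distinct image vertices. -/
def IsHomOn (F H : HGraph) (f : F.V → H.V) : Prop :=
  ∀ e ∈ F.edges, e.image f ∈ H.edges ∧ (e.image f).card = e.card

/-- There is a homomorphism from `F` to `H`. -/
def HasHom (F H : HGraph) : Prop := ∃ f, IsHomOn F H f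

/-- `H` contains no copy of any member of the family `𝓕`. -/
def Free (F : Set HGraph) (H : HGraph) : Prop := ∀ G ∈ F, ¬ HasCopy G H

/-- The extremal number `ex(n, 𝓕)`: the maximum number of edges in a
`k`-uniform hypergraph on `n` vertices that is `𝓕`-free. -/
noncomputable def exNum (k n : ℕ) (F : Set HGraph) : ℕ :=
  sSup {m | ∃ E : Finset (Finset (Fin n)),
    (∀ e ∈ E, e.card = k) ∧ Free F (HGraph.mk (Fin n) E) ∧ E.card = m}

/-- The ratio `ex(n,𝓕) / C(n,k)`. -/
noncomputable def exRatio (k : ℕ) (F : Set HGraph) (n : ℕ) : ℝ :=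
  (exNum k n F : ℝ) / (n.choose k : ℝ)

/-- The Turán density of a family (the limit of `exRatio`, realized as a limsup;
the limit exists by monotonicity). -/
noncomputable def turanDensity (k : ℕ) (F : Set HGraph) : ℝ :=
  limsup (exRatio k F) atTop

/-- The Turán density of a single hypergraph. -/
noncomputable def turanDensity₁ (k : ℕ) (F : HGraph) : ℝ := turanDensity k {F}

/-- Turn a set of vertices of a finite type into a `Finset`. -/
noncomputable def finsetOf {V : Type} [Fintype V] [DecidableEq V] (s : Set V) : Finset V :=
  (Set.toFinite s).toFinset

/-- Turn a set of edges into a `Finset` of edges. -/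
noncomputable def finsetsOf {V : Type} [Fintype V] [DecidableEq V]
    (s : Set (Finset V)) : Finset (Finset V) :=
  (Set.toFinite s).toFinset

/-- The `t`-blow-up `B(F,t)` of `F`: every vertex is replaced by `t` copies;
edges are all sets picking one copy of each vertex of an edge of `F`. -/
noncomputable def blowup (F : HGraph) (t : ℕ) : HGraph :=
  HGraph.mk (F.V × Fin t)
    (finsetsOf {S | S.image Prod.fst ∈ F.edges ∧ S.card = (S.image Prod.fst).card})

/-- The complete `k`-graph on `N` vertices. -/
def completeHG (k N : ℕ) : HGraph :=
  HGraph.mk (Fin N) (Finset.univ.powersetCard k)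
/-- One edge of the `k`-uniform zycle of length `ℓ`: row `i` together with
vertex `j` of row `i+1` (indices mod `ℓ`, `0`-based). -/
noncomputable def zycleEdge (k l i j : ℕ) : Finset (Fin l × Fin (k-1)) :=
  finsetOf {w | (w.1 : ℕ) = i % l ∨ ((w.1 : ℕ) = (i+1) % l ∧ (w.2 : ℕ) = j)}

/-- The `k`-uniform zycle `Z^{(k)}_ℓ`. -/
noncomputable def zycle (k l : ℕ) : HGraph :=
  HGraph.mk (Fin l × Fin (k-1))
    (finsetsOf {S | ∃ i j, i < l ∧ j < k-1 ∧ S = zycleEdge k l i j})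

/-- The starting set of the zycle: its row `0`. -/
noncomputable def zycleStart (k l : ℕ) : Finset (Fin l × Fin (k-1)) :=
  finsetOf {w | (w.1 : ℕ) = 0}

/-- Row `i` of a ladder-type vertex set `Fin ℓ × Fin (k-1)`. -/
noncomputable def ladderRow (k l i : ℕ) : Finset (Fin l × Fin (k-1)) :=
  finsetOf {w | (w.1 : ℕ) = i}

/-- The `k`-uniform ladder of length `ℓ` restricted to its non-terminal
vertices `v_{ij}`, `i ∈ [ℓ]`, `j ∈ [k-1]` (`0`-based indices). -/
noncomputable def openLadder (k l : ℕ) : HGraph :=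
  HGraph.mk (Fin l × Fin (k-1))
    (finsetsOf {S | ∃ i j, i+1 < l ∧ j < k-1 ∧
      S = finsetOf {w : Fin l × Fin (k-1) |
            (w.1 : ℕ) = i ∨ ((w.1 : ℕ) = i+1 ∧ (w.2 : ℕ) = j)}})

/-- The vertex type of `LZ^{(k)}(m,ℓ)`: ladder vertices `v_{ij}` (`i ∈ [m]`)
and zycle vertices `w_{ij}` (`i ∈ [ℓ]∖{1}`, encoded as `Fin (ℓ-1)`). -/
abbrev lzV (k m l : ℕ) := (Fin m × Fin (k-1)) ⊕ (Fin (l-1) × Fin (k-1))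

/-- `v` is the ladder vertex `v_{ij}` of `LZ` (`0`-based `i`, `j`). -/
def lzVPred (k m l i j : ℕ) (v : lzV k m l) : Prop :=
  ∃ w : Fin m × Fin (k-1), v = Sum.inl w ∧ (w.1 : ℕ) = i ∧ (w.2 : ℕ) = j

/-- `v` is the zycle vertex `w_{(r+2)j}` of `LZ` (`0`-based `r`, `j`). -/
def lzWPred (k m l r j : ℕ) (v : lzV k m l) : Prop :=
  ∃ w : Fin (l-1) × Fin (k-1), v = Sum.inr w ∧ (w.1 : ℕ) = r ∧ (w.2 : ℕ) = j

/-- `LZ^{(k)}(m,ℓ)`: a ladder of length `m` whose last `(k-1)`-set is closed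
into a zycle of length `ℓ`. -/
noncomputable def lz (k m l : ℕ) : HGraph :=
  HGraph.mk (lzV k m l) (finsetsOf (
    {S | ∃ i j, i+1 < m ∧ j < k-1 ∧
        S = finsetOf {v | (∃ j' < k-1, lzVPred k m l i j' v) ∨ lzVPred k m l (i+1) j v}} ∪
    {S | ∃ j, j < k-1 ∧
        S = finsetOf {v | (∃ j' < k-1, lzVPred k m l (m-1) j' v) ∨ lzWPred k m l 0 j v}} ∪
    {S | ∃ r j, r+1 < l-1 ∧ j < k-1 ∧
        S = finsetOf {v | (∃ j' < k-1, lzWPred k m l r j' v) ∨ lzWPred k m l (r+1) j v}} ∪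
    {S | ∃ j, j < k-1 ∧
        S = finsetOf {v | (∃ j' < k-1, lzWPred k m l (l-2) j' v) ∨ lzVPred k m l (m-1) j v}}))

/-- The starting set `{v_{11},…,v_{1(k-1)}}` of `LZ^{(k)}(m,ℓ)`. -/
noncomputable def lzStart (k m l : ℕ) : Finset (lzV k m l) :=
  finsetOf {v | ∃ j < k-1, lzVPred k m l 0 j v}

/-- The pairs of an `s`-set. -/
abbrev pairOf (s : ℕ) := {e : Finset (Fin s) // e.card = 2}

/-- The smaller vertex of a pair. -/
def pairLow {s : ℕ} (e : pairOf s) : Fin s :=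
  e.1.min' (Finset.card_pos.mp (by rw [e.2]; norm_num))

/-- The larger vertex of a pair. -/
def pairHigh {s : ℕ} (e : pairOf s) : Fin s :=
  e.1.max' (Finset.card_pos.mp (by rw [e.2]; norm_num))

/-- Internal ladder vertices of `GL^{(k)}(s,ℓ)`: positions `(i,j)` with
`i ∈ [ℓ]`, `j ∈ [k-1]` except the two positions `(1,k-2),(1,k-1)` of the
first row, which are occupied by the pair itself. (All `0`-based.) -/
abbrev glInner (k s l : ℕ) :=
  pairOf s × {p : Fin l × Fin (k-1) // (p.1 : ℕ) ≠ 0 ∨ (p.2 : ℕ) < k-3}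

/-- Vertex type of `GL^{(k)}(s,ℓ)`: the `s`-set `X`, the internal ladder
vertices, and the terminal vertices `t^e`. -/
abbrev glV (k s l : ℕ) := Fin s ⊕ glInner k s l ⊕ pairOf s

/-- `v` is the vertex `v^e_{ij}` of `GL^{(k)}(s,ℓ)` (`0`-based `i,j`); the two
last vertices of the first row of the ladder at `e` are the vertices of `e`. -/
def glVPred (k s l : ℕ) (e : pairOf s) (i j : ℕ) (v : glV k s l) : Prop :=
  (∃ w : glInner k s l, v = Sum.inr (Sum.inl w) ∧ w.1 = e ∧
      (w.2.1.1 : ℕ) = i ∧ (w.2.1.2 : ℕ) = j) ∨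
  (i = 0 ∧ j = k-3 ∧ v = Sum.inl (pairLow e)) ∨
  (i = 0 ∧ j = k-2 ∧ v = Sum.inl (pairHigh e))

/-- `GL^{(k)}(s,ℓ)`: to each pair `e` of the `s`-set `X` an internally
disjoint `k`-uniform ladder of length `ℓ` (with terminal vertex `t^e`) is
attached, the first row of the ladder at `e` ending in the two vertices of `e`. -/
noncomputable def gl (k s l : ℕ) : HGraph :=
  HGraph.mk (glV k s l) (finsetsOf (
    {S | ∃ e i j, i+1 < l ∧ j < k-1 ∧
        S = finsetOf {v | (∃ j' < k-1, glVPred k s l e i j' v) ∨ glVPred k s l e (i+1) j v}} ∪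
    {S | ∃ e, S = finsetOf {v | (∃ j' < k-1, glVPred k s l e (l-1) j' v) ∨
        v = Sum.inr (Sum.inr e)}}))

/-- Internal ladder vertices of `GLZ^{(k)}(s,m,ℓ)` (ladders of length `m`). -/
abbrev glzInner (k s m : ℕ) :=
  pairOf s × {p : Fin m × Fin (k-1) // (p.1 : ℕ) ≠ 0 ∨ (p.2 : ℕ) < k-3}

/-- Vertex type of `GLZ^{(k)}(s,m,ℓ)`. -/
abbrev glzV (k s m l : ℕ) := Fin s ⊕ glzInner k s m ⊕ (pairOf s × (Fin (l-1) × Fin (k-1)))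

/-- `v` is the ladder vertex `v^e_{ij}` of `GLZ^{(k)}(s,m,ℓ)`. -/
def glzVPred (k s m l : ℕ) (e : pairOf s) (i j : ℕ) (v : glzV k s m l) : Prop :=
  (∃ w : glzInner k s m, v = Sum.inr (Sum.inl w) ∧ w.1 = e ∧
      (w.2.1.1 : ℕ) = i ∧ (w.2.1.2 : ℕ) = j) ∨
  (i = 0 ∧ j = k-3 ∧ v = Sum.inl (pairLow e)) ∨
  (i = 0 ∧ j = k-2 ∧ v = Sum.inl (pairHigh e))

/-- `v` is the zycle vertex `w^e_{(r+2)j}` of `GLZ^{(k)}(s,m,ℓ)`. -/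
def glzWPred (k s m l : ℕ) (e : pairOf s) (r j : ℕ) (v : glzV k s m l) : Prop :=
  ∃ w : pairOf s × (Fin (l-1) × Fin (k-1)), v = Sum.inr (Sum.inr w) ∧ w.1 = e ∧
    (w.2.1 : ℕ) = r ∧ (w.2.2 : ℕ) = j

/-- `GLZ^{(k)}(s,m,ℓ)`: obtained from `GL^{(k)}(s,m)` (without terminal
vertices) by closing the end of each ladder into a zycle of length `ℓ`. -/
noncomputable def glz (k s m l : ℕ) : HGraph :=
  HGraph.mk (glzV k s m l) (finsetsOf (
    {S | ∃ e i j, i+1 < m ∧ j < k-1 ∧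
        S = finsetOf {v | (∃ j' < k-1, glzVPred k s m l e i j' v) ∨
              glzVPred k s m l e (i+1) j v}} ∪
    {S | ∃ e j, j < k-1 ∧
        S = finsetOf {v | (∃ j' < k-1, glzVPred k s m l e (m-1) j' v) ∨
              glzWPred k s m l e 0 j v}} ∪
    {S | ∃ e r j, r+1 < l-1 ∧ j < k-1 ∧
        S = finsetOf {v | (∃ j' < k-1, glzWPred k s m l e r j' v) ∨
              glzWPred k s m l e (r+1) j v}} ∪
    {S | ∃ e j, j < k-1 ∧
        S = finsetOf {v | (∃ j' < k-1, glzWPred k s m l e (l-2) j' v) ∨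
              glzVPred k s m l e (m-1) j v}}))

section Support
open Finset

-- ===== box theorem =====

theorem boxthm : ∀ (v : ℕ) (t : ℕ) (δ : ℝ), 0 < δ →
    ∃ n₀ : ℕ, ∀ n, n₀ ≤ n → ∀ D : Finset (Fin v → Fin n),
      δ * (n:ℝ)^v ≤ D.card →
      ∃ W : Fin v → Finset (Fin n), (∀ i, (W i).card = t) ∧
        ∀ f : Fin v → Fin n, (∀ i, f i ∈ W i) → f ∈ D := by
  intro v
  induction v with
  | zero =>
    intro t δ hδ
    refine ⟨1, fun n hn D hD => ?_⟩
    have hpos : (0:ℝ) < D.card := lt_of_lt_of_le (by simpa using hδ) (by simpa using hD)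
    have hne : D.Nonempty := Finset.card_pos.mp (by exact_mod_cast hpos)
    obtain ⟨g, hg⟩ := hne
    exact ⟨fun i => i.elim0, fun i => i.elim0, fun f _ => by
      have : f = g := funext fun i => i.elim0
      rwa [this]⟩
  | succ v IH =>
    intro t δ hδ
    set δ' : ℝ := (δ/2) * (δ/4)^t with hδ'def
    have hδ' : 0 < δ' := by positivity
    obtain ⟨n₁, hIH⟩ := IH t δ' hδ'
    refine ⟨n₁ + t + 1 + ⌈(4*t)/δ⌉₊, fun n hn D hD => ?_⟩
    have hn1 : n₁ ≤ n := by omega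
    have hnpos : 0 < n := by omega
    have hnt : t ≤ n := by omega
    have htn : (t:ℝ) ≤ δ/4 * n := by
      have h4 : (4*(t:ℝ))/δ ≤ (⌈4*(t:ℝ)/δ⌉₊ : ℝ) := Nat.le_ceil _
      have h5 : ((⌈4*(t:ℝ)/δ⌉₊:ℕ):ℝ) ≤ (n:ℝ) := by exact_mod_cast (by omega : ⌈4*(t:ℝ)/δ⌉₊ ≤ n)
      have h6 := (div_le_iff₀ hδ).mp (le_trans h4 h5)
      nlinarith
    classical
    set d : (Fin v → Fin n) → Finset (Fin n) :=
      fun g => univ.filter (fun x => Fin.cons x g ∈ D) with hd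
    set s : ℕ := ⌊(δ/2) * n⌋₊ with hs
    have hsle : (s:ℝ) ≤ (δ/2) * n := Nat.floor_le (by positivity)
    have hslt : (δ/2) * n < s + 1 := Nat.lt_floor_add_one _
    have hts : t ≤ s := by
      have : (t:ℝ) < s + 1 := lt_of_le_of_lt (le_trans htn (by linarith)) hslt
      exact_mod_cast Nat.lt_add_one_iff.mp (by exact_mod_cast this)
    -- Claim 1 : D.card ≤ ∑ g, (d g).card
    have claim1 : D.card ≤ ∑ g : Fin v → Fin n, (d g).card := by
      rw [Finset.card_eq_sum_card_fiberwise (f := Fin.tail)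
        (t := (univ : Finset (Fin v → Fin n))) (fun f _ => mem_univ _)]
      apply Finset.sum_le_sum
      intro g _
      apply Finset.card_le_card_of_injOn (fun f => f 0)
      · intro f hf
        simp only [Finset.mem_coe, mem_filter] at hf
        simp only [Finset.mem_coe, hd, mem_filter, mem_univ, true_and]
        rw [← hf.2, Fin.cons_self_tail]
        exact hf.1
      · intro f hf f' hf' h0
        simp only [Finset.mem_coe, mem_filter] at hf hf'
        have := hf.2.trans hf'.2.symm
        funext i
        refine Fin.cases ?_ ?_ i
        · exact h0
        · intro j
          exact congrFun this j
    -- big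
    set big : Finset (Fin v → Fin n) := univ.filter (fun g => s ≤ (d g).card) with hbig
    have claim2 : (∑ g : Fin v → Fin n, (d g).card) ≤ big.card * n + n^v * s := by
      rw [← Finset.sum_filter_add_sum_filter_not univ (fun g => s ≤ (d g).card)]
      gcongr
      · calc (∑ g ∈ big, (d g).card) ≤ ∑ _g ∈ big, n :=
            Finset.sum_le_sum (fun g _ => le_trans (card_filter_le _ _) (by simp))
          _ = big.card * n := by rw [Finset.sum_const, smul_eq_mul]
      · calc (∑ g ∈ univ.filter (fun g => ¬ s ≤ (d g).card), (d g).card)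
            ≤ ∑ _g ∈ univ.filter (fun g => ¬ s ≤ (d g).card), s :=
            Finset.sum_le_sum (fun g hg => by
              simp only [mem_filter, not_le] at hg; exact le_of_lt hg.2)
          _ ≤ n^v * s := by
            rw [Finset.sum_const, smul_eq_mul]
            gcongr
            calc (univ.filter (fun g => ¬ s ≤ (d g).card)).card ≤ (univ : Finset (Fin v → Fin n)).card := card_filter_le _ _
              _ = n ^ v := by simp [Fintype.card_fun]
    have hbigcard : (δ/2) * (n:ℝ)^v ≤ big.card := by
      have h1 : (D.card:ℝ) ≤ big.card * n + (n:ℝ)^v * s := by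
        calc (D.card:ℝ) ≤ (∑ g : Fin v → Fin n, (d g).card : ℕ) := by exact_mod_cast claim1
          _ ≤ ((big.card * n + n^v * s : ℕ):ℝ) := by exact_mod_cast claim2
          _ = big.card * n + (n:ℝ)^v * s := by push_cast; ring
      have h2 : δ * (n:ℝ)^(v+1) ≤ big.card * n + (n:ℝ)^v * ((δ/2)*n) := by
        calc δ * (n:ℝ)^(v+1) ≤ (D.card:ℝ) := hD
          _ ≤ big.card * n + (n:ℝ)^v * s := h1
          _ ≤ big.card * n + (n:ℝ)^v * ((δ/2)*n) := by gcongr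
      have hn' : (0:ℝ) < n := by exact_mod_cast hnpos
      rw [← mul_le_mul_iff_of_pos_right hn']
      calc (δ/2) * (n:ℝ)^v * n = δ * n^(v+1) - (n:ℝ)^v * ((δ/2)*n) := by ring
        _ ≤ big.card * n := by linarith
    -- Claim 3
    set 𝒯 : Finset (Finset (Fin n)) := powersetCard t univ with h𝒯
    have claim3 : big.card * s.choose t ≤
        ∑ T ∈ 𝒯, (univ.filter (fun g => T ⊆ d g)).card := by
      have swap : ∑ T ∈ 𝒯, (univ.filter (fun g => T ⊆ d g)).card
          = ∑ g : Fin v → Fin n, ((d g).card).choose t := by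
        calc ∑ T ∈ 𝒯, (univ.filter (fun g => T ⊆ d g)).card
            = ∑ T ∈ 𝒯, ∑ g : Fin v → Fin n, (if T ⊆ d g then 1 else 0) := by
              refine Finset.sum_congr rfl (fun T _ => ?_)
              rw [Finset.card_filter]
          _ = ∑ g : Fin v → Fin n, ∑ T ∈ 𝒯, (if T ⊆ d g then 1 else 0) :=
              Finset.sum_comm
          _ = ∑ g : Fin v → Fin n, (𝒯.filter (fun T => T ⊆ d g)).card := by
              refine Finset.sum_congr rfl (fun g _ => ?_)
              rw [Finset.card_filter]
          _ = ∑ g : Fin v → Fin n, ((d g).card).choose t := by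
              apply Finset.sum_congr rfl
              intro g _
              have : 𝒯.filter (fun T => T ⊆ d g) = (d g).powersetCard t := by
                ext T
                simp only [h𝒯, mem_filter, mem_powersetCard, subset_univ, true_and]
                tauto
              rw [this, card_powersetCard]
      rw [swap]
      calc big.card * s.choose t = ∑ _g ∈ big, s.choose t := by
            rw [Finset.sum_const, smul_eq_mul]
        _ ≤ ∑ g ∈ big, ((d g).card).choose t := by
            apply Finset.sum_le_sum
            intro g hg
            simp only [hbig, mem_filter] at hg
            exact Nat.choose_le_choose t hg.2
        _ ≤ ∑ g : Fin v → Fin n, ((d g).card).choose t :=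
            Finset.sum_le_sum_of_subset (filter_subset _ _)
    -- choose bound : (δ/4)^t * (n.choose t) ≤ s.choose t
    have hchoose : (δ/4)^t * (n.choose t : ℝ) ≤ (s.choose t : ℝ) := by
      have hdesc1 : ((s+1-t)^t : ℕ) ≤ s.descFactorial t := Nat.pow_sub_le_descFactorial s t
      have hdesc2 : (n.descFactorial t : ℕ) ≤ n^t := Nat.descFactorial_le_pow n t
      have e1 : (s.descFactorial t : ℝ) = (t.factorial : ℝ) * s.choose t := by
        exact_mod_cast Nat.descFactorial_eq_factorial_mul_choose s t
      have e2 : (n.descFactorial t : ℝ) = (t.factorial : ℝ) * n.choose t := by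
        exact_mod_cast Nat.descFactorial_eq_factorial_mul_choose n t
      have hsub : (δ/4) * n ≤ ((s+1-t : ℕ) : ℝ) := by
        have : ((s+1-t : ℕ) : ℝ) = (s:ℝ) + 1 - t := by
          have : t ≤ s + 1 := by omega
          push_cast [this]; ring
        rw [this]
        linarith
      have h1 : ((δ/4) * n)^t ≤ (t.factorial : ℝ) * s.choose t := by
        rw [← e1]
        calc ((δ/4) * n)^t ≤ (((s+1-t : ℕ):ℝ))^t := by
              apply pow_le_pow_left₀ (by positivity) hsub
          _ = (((s+1-t)^t : ℕ) : ℝ) := by push_cast; ring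
          _ ≤ (s.descFactorial t : ℝ) := by exact_mod_cast hdesc1
      have h2 : (t.factorial : ℝ) * n.choose t ≤ (n:ℝ)^t := by
        rw [← e2]
        exact_mod_cast hdesc2
      have htf : (0:ℝ) < t.factorial := by exact_mod_cast t.factorial_pos
      rw [← mul_le_mul_iff_of_pos_left htf]
      calc (t.factorial : ℝ) * ((δ/4)^t * n.choose t)
          = (δ/4)^t * ((t.factorial : ℝ) * n.choose t) := by ring
        _ ≤ (δ/4)^t * (n:ℝ)^t := by
            apply mul_le_mul_of_nonneg_left h2 (by positivity)
        _ = ((δ/4) * n)^t := by rw [mul_pow]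
        _ ≤ (t.factorial : ℝ) * s.choose t := h1
    -- find T
    have h𝒯card : 𝒯.card = n.choose t := by
      rw [h𝒯, card_powersetCard, card_univ, Fintype.card_fin]
    have h𝒯ne : 𝒯.Nonempty := by
      rw [h𝒯]
      exact (powersetCard_nonempty).mpr (by simpa using hnt)
    have hT : ∃ T ∈ 𝒯, δ' * (n:ℝ)^v ≤ (univ.filter (fun g => T ⊆ d g)).card := by
      by_contra hcon
      push_neg at hcon
      have hsum : ((∑ T ∈ 𝒯, (univ.filter (fun g => T ⊆ d g)).card : ℕ) : ℝ)
          < 𝒯.card * (δ' * (n:ℝ)^v) := by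
        push_cast
        calc (∑ T ∈ 𝒯, ((univ.filter (fun g => T ⊆ d g)).card : ℝ))
            < ∑ _T ∈ 𝒯, δ' * (n:ℝ)^v := by
              apply Finset.sum_lt_sum_of_nonempty h𝒯ne
              intro T hT
              exact hcon T hT
          _ = 𝒯.card * (δ' * (n:ℝ)^v) := by rw [Finset.sum_const, nsmul_eq_mul]
      have hlow : (𝒯.card : ℝ) * (δ' * (n:ℝ)^v) ≤
          ((∑ T ∈ 𝒯, (univ.filter (fun g => T ⊆ d g)).card : ℕ) : ℝ) := by
        calc (𝒯.card : ℝ) * (δ' * (n:ℝ)^v)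
            = (δ/2 * (n:ℝ)^v) * ((δ/4)^t * (n.choose t : ℝ)) := by
              rw [h𝒯card, hδ'def]; ring
          _ ≤ (big.card : ℝ) * (s.choose t : ℝ) := by
              apply mul_le_mul hbigcard hchoose (by positivity)
                (le_trans (by positivity) hbigcard)
          _ = ((big.card * s.choose t : ℕ) : ℝ) := by push_cast; ring
          _ ≤ _ := by exact_mod_cast claim3
      linarith
    obtain ⟨T, hTmem, hTcard⟩ := hT
    obtain ⟨W, hWcard, hWsel⟩ := hIH n hn1 (univ.filter (fun g => T ⊆ d g)) hTcard
    refine ⟨Fin.cons T W, ?_, ?_⟩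
    · intro i
      refine Fin.cases ?_ ?_ i
      · rw [Fin.cons_zero]
        exact (mem_powersetCard.mp hTmem).2
      · intro j
        rw [Fin.cons_succ]
        exact hWcard j
    · intro f hf
      have htail : Fin.tail f ∈ univ.filter (fun g => T ⊆ d g) := by
        apply hWsel
        intro i
        have := hf i.succ
        rwa [Fin.cons_succ] at this
      simp only [mem_filter, mem_univ, true_and] at htail
      have h0 : f 0 ∈ T := by
        have := hf 0
        rwa [Fin.cons_zero] at this
      have : f 0 ∈ d (Fin.tail f) := htail h0
      simp only [hd, mem_filter, mem_univ, true_and] at this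
      rwa [Fin.cons_self_tail] at this


-- ===== basic exNum facts =====

lemma exNum_mem_le (k n : ℕ) (𝓕 : Set HGraph) {m : ℕ}
    (hm : m ∈ {m | ∃ E : Finset (Finset (Fin n)),
      (∀ e ∈ E, e.card = k) ∧ Free 𝓕 (HGraph.mk (Fin n) E) ∧ E.card = m}) :
    m ≤ n.choose k := by
  obtain ⟨E, hunif, -, hcard⟩ := hm
  subst hcard
  calc E.card ≤ ((univ : Finset (Fin n)).powersetCard k).card := by
        apply Finset.card_le_card
        intro e he
        simp only [Finset.mem_powersetCard]
        exact ⟨Finset.subset_univ _, hunif e he⟩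
    _ = n.choose k := by rw [Finset.card_powersetCard, Finset.card_univ, Fintype.card_fin]

lemma exNum_bddAbove (k n : ℕ) (𝓕 : Set HGraph) :
    BddAbove {m | ∃ E : Finset (Finset (Fin n)),
      (∀ e ∈ E, e.card = k) ∧ Free 𝓕 (HGraph.mk (Fin n) E) ∧ E.card = m} :=
  ⟨n.choose k, fun m hm => exNum_mem_le k n 𝓕 hm⟩

lemma exNum_le_choose (k n : ℕ) (𝓕 : Set HGraph) : exNum k n 𝓕 ≤ n.choose k := by
  unfold exNum
  rcases Set.eq_empty_or_nonempty {m | ∃ E : Finset (Finset (Fin n)),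
      (∀ e ∈ E, e.card = k) ∧ Free 𝓕 (HGraph.mk (Fin n) E) ∧ E.card = m} with h | h
  · rw [h]
    simp
  · exact csSup_le h (fun m hm => exNum_mem_le k n 𝓕 hm)

lemma exRatio_nonneg (k : ℕ) (𝓕 : Set HGraph) (n : ℕ) : 0 ≤ exRatio k 𝓕 n := by
  unfold exRatio
  positivity

lemma exRatio_le_one (k : ℕ) (𝓕 : Set HGraph) (n : ℕ) : exRatio k 𝓕 n ≤ 1 := by
  unfold exRatio
  rcases Nat.eq_zero_or_pos (n.choose k) with h | h
  · rw [h]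
    simp
  · rw [div_le_one (by exact_mod_cast h)]
    exact_mod_cast exNum_le_choose k n 𝓕

-- ===== copies =====

lemma isCopy_comp {F G H : HGraph} {f : F.V → G.V} {g : G.V → H.V}
    (hf : IsCopy F G f) (hg : IsCopy G H g) : IsCopy F H (g ∘ f) := by
  refine ⟨hg.1.comp hf.1, fun e he => ?_⟩
  rw [← Finset.image_image]
  exact hg.2 _ (hf.2 e he)

lemma isCopy_blowup (F : HGraph) {t : ℕ} (ht : 1 ≤ t) :
    IsCopy F (blowup F t) (fun v => (v, ⟨0, ht⟩)) := by
  constructor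
  · intro a b hab
    exact congrArg Prod.fst hab
  · intro e he
    show _ ∈ (blowup F t).edges
    unfold blowup finsetsOf
    rw [Set.Finite.mem_toFinset]
    have hcomp : (e.image (fun v => (v, (⟨0, ht⟩ : Fin t)))).image Prod.fst = e := by
      rw [Finset.image_image]
      ext x
      simp [Function.comp]
    constructor
    · rw [hcomp]
      exact he
    · rw [hcomp, Finset.card_image_of_injective _
        (fun a b hab => (congrArg Prod.fst hab : _))]

lemma free_blowup_of_free {F : HGraph} {t : ℕ} (ht : 1 ≤ t) (H : HGraph)
    (hfree : Free {F} H) : Free {blowup F t} H := by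
  intro G hG
  rw [Set.mem_singleton_iff] at hG
  subst hG
  rintro ⟨g, hg⟩
  exact hfree F rfl ⟨g ∘ (fun v => (v, ⟨0, ht⟩)), isCopy_comp (isCopy_blowup F ht) hg⟩

lemma exNum_mono (k n t : ℕ) (ht : 1 ≤ t) (F : HGraph) :
    exNum k n {F} ≤ exNum k n {blowup F t} := by
  unfold exNum
  rcases Set.eq_empty_or_nonempty {m | ∃ E : Finset (Finset (Fin n)),
      (∀ e ∈ E, e.card = k) ∧ Free {F} (HGraph.mk (Fin n) E) ∧ E.card = m} with h | h
  · rw [h]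
    simp
  · apply csSup_le_csSup (exNum_bddAbove k n {blowup F t}) h
    rintro m ⟨E, hunif, hfree, hcard⟩
    exact ⟨E, hunif, free_blowup_of_free ht _ hfree, hcard⟩

-- ===== superset counting =====

lemma card_supersets {n M r : ℕ} (e : Finset (Fin n)) (he : e.card = r) (hrM : r ≤ M) :
    (((univ : Finset (Fin n)).powersetCard M).filter (fun S => e ⊆ S)).card
      = (n - r).choose (M - r) := by
  classical
  have : (((univ : Finset (Fin n)).powersetCard M).filter (fun S => e ⊆ S)).card
      = ((univ \ e).powersetCard (M - r)).card := by
    apply Finset.card_nbij' (i := fun S => S \ e) (j := fun T => T ∪ e)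
    · intro S hS
      simp only [Finset.mem_coe, Finset.mem_filter, Finset.mem_powersetCard] at hS
      simp only [Finset.mem_coe, Finset.mem_powersetCard]
      refine ⟨Finset.sdiff_subset_sdiff hS.1.1 le_rfl, ?_⟩
      rw [Finset.card_sdiff_of_subset hS.2, hS.1.2, he]
    · intro T hT
      simp only [Finset.mem_coe, Finset.mem_powersetCard] at hT
      simp only [Finset.mem_coe, Finset.mem_filter, Finset.mem_powersetCard]
      have hdisj : Disjoint T e := by
        rw [Finset.disjoint_left]
        intro u huT hue
        have := hT.1 huT
        rw [Finset.mem_sdiff] at this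
        exact this.2 hue
      refine ⟨⟨Finset.subset_univ _, ?_⟩, Finset.subset_union_right⟩
      rw [Finset.card_union_of_disjoint hdisj, hT.2]
      omega
    · intro S hS
      simp only [Finset.mem_coe, Finset.mem_filter, Finset.mem_powersetCard] at hS
      exact Finset.sdiff_union_of_subset hS.2
    · intro T hT
      simp only [Finset.mem_coe, Finset.mem_powersetCard] at hT
      have hdisj : Disjoint T e := by
        rw [Finset.disjoint_left]
        intro u huT hue
        have := hT.1 huT
        rw [Finset.mem_sdiff] at this
        exact this.2 hue
      exact Finset.union_sdiff_cancel_right hdisj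
  rw [this, Finset.card_powersetCard]
  congr 1
  rw [Finset.card_sdiff_of_subset (Finset.subset_univ e), Finset.card_univ, Fintype.card_fin, he]

-- ===== copy extraction from a rich set =====

lemma copy_of_rich {k M n : ℕ} (F : HGraph) (E : Finset (Finset (Fin n)))
    (hunif : ∀ e ∈ E, e.card = k) (S : Finset (Fin n)) (hScard : S.card = M)
    (hrich : exNum k M {F} < (E.filter (· ⊆ S)).card) :
    ∃ f : F.V → Fin n, Function.Injective f ∧ (∀ e ∈ F.edges, e.image f ∈ E) ∧
      ∀ v, f v ∈ S := by
  classical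
  set φ := S.orderIsoOfFin hScard with hφ
  set ψ : Fin M → Fin n := fun i => (φ i : Fin n) with hψ
  have hψinj : Function.Injective ψ := fun a b hab => φ.injective (Subtype.ext hab)
  have hψS : ∀ i, ψ i ∈ S := fun i => (φ i).2
  have hbij : ∀ e ∈ E.filter (· ⊆ S), Set.BijOn ψ (ψ ⁻¹' e) e := by
    intro e he
    simp only [Finset.mem_filter] at he
    refine ⟨fun x hx => hx, hψinj.injOn, ?_⟩
    intro y hy
    have hyS : y ∈ S := he.2 hy
    refine ⟨φ.symm ⟨y, hyS⟩, ?_, ?_⟩ <;>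
      simp [hψ, Set.mem_preimage]
    · exact hy
  set E' : Finset (Finset (Fin M)) :=
    (E.filter (· ⊆ S)).image (fun e => e.preimage ψ hψinj.injOn) with hE'
  have himgpre : ∀ e ∈ E.filter (· ⊆ S), (e.preimage ψ hψinj.injOn).image ψ = e :=
    fun e he => Finset.image_preimage_of_bij ψ e (hbij e he)
  have hcardpre : ∀ e ∈ E.filter (· ⊆ S), (e.preimage ψ hψinj.injOn).card = e.card := by
    intro e he
    have h := Finset.card_image_of_injective (e.preimage ψ hψinj.injOn) hψinj
    rw [himgpre e he] at h
    exact h.symm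
  have hE'card : E'.card = (E.filter (· ⊆ S)).card := by
    rw [hE']
    apply Finset.card_image_of_injOn
    intro e₁ h₁ e₂ h₂ hpre
    have h₁' : e₁ ∈ E.filter (· ⊆ S) := Finset.mem_coe.mp h₁
    have h₂' : e₂ ∈ E.filter (· ⊆ S) := Finset.mem_coe.mp h₂
    have h3 : (e₁.preimage ψ hψinj.injOn).image ψ
        = (e₂.preimage ψ hψinj.injOn).image ψ := congrArg _ hpre
    rwa [himgpre e₁ h₁', himgpre e₂ h₂'] at h3
  have hE'unif : ∀ e' ∈ E', e'.card = k := by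
    rintro e' he'
    rw [hE', Finset.mem_image] at he'
    obtain ⟨e, he, rfl⟩ := he'
    rw [hcardpre e he]
    exact hunif e (Finset.mem_filter.mp he).1
  have hnotfree : ¬ Free {F} (HGraph.mk (Fin M) E') := by
    intro hfree
    have hmem : E'.card ∈ {m | ∃ E'' : Finset (Finset (Fin M)),
        (∀ e ∈ E'', e.card = k) ∧ Free {F} (HGraph.mk (Fin M) E'') ∧ E''.card = m} :=
      ⟨E', hE'unif, hfree, rfl⟩
    have := le_csSup (exNum_bddAbove k M {F}) hmem
    rw [hE'card] at this
    exact absurd this (not_le.mpr hrich)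
  have hcopy : HasCopy F (HGraph.mk (Fin M) E') := by
    unfold Free at hnotfree
    push_neg at hnotfree
    obtain ⟨G, hG, hc⟩ := hnotfree
    rw [Set.mem_singleton_iff] at hG
    subst hG
    exact hc
  obtain ⟨g, hginj, hgedge⟩ := hcopy
  refine ⟨ψ ∘ g, hψinj.comp hginj, ?_, fun v => hψS _⟩
  intro e he
  have hmem : e.image g ∈ E' := hgedge e he
  rw [hE', Finset.mem_image] at hmem
  obtain ⟨e₀, he₀, heq⟩ := hmem
  have : (e.image g).image ψ = e₀ := by rw [← heq, himgpre e₀ he₀]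
  rw [← Finset.image_image, this]
  exact (Finset.mem_filter.mp he₀).1

-- ===== limsup utilities =====

lemma turanDensity_nonneg (k : ℕ) (𝓕 : Set HGraph) : 0 ≤ turanDensity k 𝓕 :=
  le_limsup_of_frequently_le
    (Filter.Frequently.of_forall (fun n => exRatio_nonneg k 𝓕 n))
    (Filter.isBoundedUnder_of ⟨1, fun n => exRatio_le_one k 𝓕 n⟩)

lemma eventually_exRatio_le (k : ℕ) (𝓕 : Set HGraph) {ε : ℝ} (hε : 0 < ε) :
    ∀ᶠ n in Filter.atTop, exRatio k 𝓕 n ≤ turanDensity k 𝓕 + ε := by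
  set A := {a : ℝ | ∀ᶠ n in Filter.atTop, exRatio k 𝓕 n ≤ a} with hA
  have h1 : (1:ℝ) ∈ A := Filter.Eventually.of_forall (fun n => exRatio_le_one k 𝓕 n)
  have hbdd : BddBelow A := by
    refine ⟨0, fun a ha => ?_⟩
    obtain ⟨n, hn⟩ := ha.exists
    exact le_trans (exRatio_nonneg k 𝓕 n) hn
  have heq : turanDensity k 𝓕 = sInf A := Filter.limsup_eq
  have hlt : sInf A < turanDensity k 𝓕 + ε := by rw [← heq]; linarith
  obtain ⟨a, haA, halt⟩ := (csInf_lt_iff hbdd ⟨1, h1⟩).mp hlt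
  exact haA.mono (fun n hn => le_trans hn (le_of_lt halt))

-- ===== the main quantitative bound =====

set_option maxHeartbeats 1000000 in
lemma main_bound (k t : ℕ) (F : HGraph) (ht : 1 ≤ t) {ε : ℝ} (hε : 0 < ε) :
    ∃ N : ℕ, ∀ n, N ≤ n →
      (exNum k n {blowup F t} : ℝ) ≤ (turanDensity₁ k F + ε) * (n.choose k) := by
  classical
  set π := turanDensity₁ k F with hπ
  have hπ0 : 0 ≤ π := turanDensity_nonneg k {F}
  set v := Fintype.card F.V with hv
  obtain ⟨M₀, hM₀⟩ := Filter.eventually_atTop.mp (eventually_exRatio_le k {F} (half_pos hε))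
  set M := M₀ + k + v + 1 with hM
  have hkM : k ≤ M := by omega
  have hvM : v ≤ M := by omega
  have hMchoosek : 0 < M.choose k := Nat.choose_pos hkM
  have hMchoosev : 0 < M.choose v := Nat.choose_pos hvM
  have hexM : (exNum k M {F} : ℝ) ≤ (π + ε/2) * (M.choose k) := by
    have h := hM₀ M (by omega)
    unfold exRatio at h
    rw [div_le_iff₀ (by exact_mod_cast hMchoosek)] at h
    exact h
  set δ : ℝ := (ε/2) / (M.choose v) / (v.factorial * 2^v) with hδdef
  have hδ : 0 < δ := by positivity
  obtain ⟨n₂, hbox⟩ := boxthm v t δ hδ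
  refine ⟨M + n₂ + 2*v + 1, fun n hn => ?_⟩
  have hMn : M ≤ n := by omega
  have hkn : k ≤ n := by omega
  have hvn : v ≤ n := by omega
  have hRHS0 : 0 ≤ (π + ε) * (n.choose k : ℝ) := by positivity
  set A := {m | ∃ E : Finset (Finset (Fin n)),
    (∀ e ∈ E, e.card = k) ∧ Free {blowup F t} (HGraph.mk (Fin n) E) ∧ E.card = m} with hA
  have hexeq : exNum k n {blowup F t} = sSup A := rfl
  rcases Set.eq_empty_or_nonempty A with hAe | hAne
  · rw [hexeq, hAe]
    simpa using hRHS0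
  · have hEx : exNum k n {blowup F t} ∈ A := by
      rw [hexeq]
      exact Nat.sSup_mem hAne (exNum_bddAbove k n {blowup F t})
    obtain ⟨E, hunif, hfree, hcard⟩ := hEx
    rw [← hcard]
    by_contra hcon
    push_neg at hcon
    -- rich M-sets
    set pc := (univ : Finset (Fin n)).powersetCard M with hpc
    set rich := pc.filter (fun S => exNum k M {F} < (E.filter (· ⊆ S)).card) with hrichdef
    have hsum1 : ∑ S ∈ pc, (E.filter (· ⊆ S)).card = E.card * ((n - k).choose (M - k)) := by
      calc ∑ S ∈ pc, (E.filter (· ⊆ S)).card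
          = ∑ S ∈ pc, ∑ e ∈ E, if e ⊆ S then 1 else 0 :=
            Finset.sum_congr rfl (fun S _ => Finset.card_filter _ _)
        _ = ∑ e ∈ E, ∑ S ∈ pc, if e ⊆ S then 1 else 0 := Finset.sum_comm
        _ = ∑ e ∈ E, (pc.filter (fun S => e ⊆ S)).card :=
            Finset.sum_congr rfl (fun e _ => (Finset.card_filter _ _).symm)
        _ = ∑ e ∈ E, (n - k).choose (M - k) :=
            Finset.sum_congr rfl (fun e he => card_supersets e (hunif e he) hkM)
        _ = E.card * ((n - k).choose (M - k)) := by rw [Finset.sum_const, smul_eq_mul]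
    have hsub_le : ∀ S ∈ pc, (E.filter (· ⊆ S)).card ≤ M.choose k := by
      intro S hS
      rw [hpc, Finset.mem_powersetCard] at hS
      calc (E.filter (· ⊆ S)).card ≤ (S.powersetCard k).card := by
            apply Finset.card_le_card
            intro e he'
            rw [Finset.mem_filter] at he'
            rw [Finset.mem_powersetCard]
            exact ⟨he'.2, hunif e he'.1⟩
        _ = M.choose k := by rw [Finset.card_powersetCard, hS.2]
    have hpccard : pc.card = n.choose M := by
      rw [hpc, Finset.card_powersetCard, Finset.card_univ, Fintype.card_fin]
    have hsum2 : E.card * ((n - k).choose (M - k)) ≤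
        rich.card * M.choose k + (n.choose M) * exNum k M {F} := by
      rw [← hsum1, ← Finset.sum_filter_add_sum_filter_not pc
        (fun S => exNum k M {F} < (E.filter (· ⊆ S)).card)]
      apply add_le_add
      · calc ∑ S ∈ rich, (E.filter (· ⊆ S)).card ≤ ∑ _S ∈ rich, M.choose k :=
              Finset.sum_le_sum (fun S hS => hsub_le S (Finset.mem_of_mem_filter S hS))
          _ = rich.card * M.choose k := by rw [Finset.sum_const, smul_eq_mul]
      · calc ∑ S ∈ pc.filter (fun S => ¬ exNum k M {F} < (E.filter (· ⊆ S)).card),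
              (E.filter (· ⊆ S)).card
            ≤ ∑ _S ∈ pc.filter (fun S => ¬ exNum k M {F} < (E.filter (· ⊆ S)).card),
              exNum k M {F} :=
              Finset.sum_le_sum (fun S hS => not_lt.mp (Finset.mem_filter.mp hS).2)
          _ ≤ (n.choose M) * exNum k M {F} := by
              rw [Finset.sum_const, smul_eq_mul]
              apply Nat.mul_le_mul_right
              rw [← hpccard]
              exact Finset.card_le_card (Finset.filter_subset _ _)
    have hid1 : (n.choose M) * (M.choose k) = (n.choose k) * ((n-k).choose (M-k)) :=
      Nat.choose_mul hkM
    have hchooseMk : (0:ℝ) < (M.choose k : ℝ) := by exact_mod_cast hMchoosek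
    have hrichlow : (ε/2) * (n.choose M : ℝ) ≤ rich.card := by
      rw [← mul_le_mul_iff_of_pos_right hchooseMk]
      have r1 : (E.card : ℝ) * ((n-k).choose (M-k) : ℝ)
          ≤ rich.card * (M.choose k : ℝ) + (n.choose M : ℝ) * (exNum k M {F} : ℝ) := by
        exact_mod_cast hsum2
      have r2 : (n.choose M : ℝ) * (exNum k M {F} : ℝ)
          ≤ (n.choose M : ℝ) * ((π + ε/2) * (M.choose k)) := by
        apply mul_le_mul_of_nonneg_left hexM (by positivity)
      have r3 : ((π + ε) * (n.choose k : ℝ)) * ((n-k).choose (M-k) : ℝ)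
          ≤ (E.card : ℝ) * ((n-k).choose (M-k) : ℝ) := by
        apply mul_le_mul_of_nonneg_right (le_of_lt hcon) (by positivity)
      have r4 : (n.choose M : ℝ) * (M.choose k : ℝ)
          = (n.choose k : ℝ) * ((n-k).choose (M-k) : ℝ) := by exact_mod_cast hid1
      nlinarith [r1, r2, r3, r4]
    -- copies
    haveI : Nonempty (Fin n) := ⟨⟨0, by omega⟩⟩
    set Copies := (univ : Finset (F.V → Fin n)).filter
        (fun f => Function.Injective f ∧ ∀ e ∈ F.edges, e.image f ∈ E) with hCopies
    set c : Finset (Fin n) → (F.V → Fin n) := fun S =>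
      if h : ∃ f : F.V → Fin n, Function.Injective f ∧ (∀ e ∈ F.edges, e.image f ∈ E)
          ∧ ∀ w, f w ∈ S
      then h.choose else Classical.arbitrary _ with hc
    have hcprop : ∀ S ∈ rich,
        Function.Injective (c S) ∧ (∀ e ∈ F.edges, e.image (c S) ∈ E) ∧ ∀ w, c S w ∈ S := by
      intro S hS
      rw [hrichdef, Finset.mem_filter, hpc, Finset.mem_powersetCard] at hS
      have hex := copy_of_rich F E hunif S hS.1.2 hS.2
      simp only [hc, dif_pos hex]
      exact hex.choose_spec
    have hfiber : ∀ g ∈ rich.image c,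
        (rich.filter (fun S => c S = g)).card ≤ (n - v).choose (M - v) := by
      intro g hg
      rw [Finset.mem_image] at hg
      obtain ⟨S₀, hS₀, hgS₀⟩ := hg
      have hgprop : Function.Injective g := hgS₀ ▸ (hcprop S₀ hS₀).1
      have himgcard : ((univ : Finset F.V).image g).card = v := by
        rw [Finset.card_image_of_injective _ hgprop, Finset.card_univ]
      calc (rich.filter (fun S => c S = g)).card
          ≤ (pc.filter (fun S => ((univ : Finset F.V).image g) ⊆ S)).card := by
            apply Finset.card_le_card
            intro S hS
            rw [Finset.mem_filter] at hS ⊢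
            obtain ⟨hSr, hSc⟩ := hS
            refine ⟨(Finset.mem_filter.mp (hrichdef ▸ hSr)).1, ?_⟩
            intro x hx
            rw [Finset.mem_image] at hx
            obtain ⟨w, -, rfl⟩ := hx
            have := (hcprop S hSr).2.2 w
            rwa [hSc] at this
        _ = (n - v).choose (M - v) := card_supersets _ himgcard hvM
    have himgcop : rich.image c ⊆ Copies := by
      intro g hg
      rw [Finset.mem_image] at hg
      obtain ⟨S₀, hS₀, rfl⟩ := hg
      rw [hCopies, Finset.mem_filter]
      exact ⟨Finset.mem_univ _, (hcprop S₀ hS₀).1, (hcprop S₀ hS₀).2.1⟩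
    have hRleC : rich.card ≤ (n - v).choose (M - v) * Copies.card := by
      calc rich.card ≤ (n-v).choose (M-v) * (rich.image c).card :=
            Finset.card_le_mul_card_image (f := c) rich _ hfiber
        _ ≤ (n - v).choose (M - v) * Copies.card :=
            Nat.mul_le_mul_left _ (Finset.card_le_card himgcop)
    -- lower bound on Copies.card
    have hchoosenvMv : 0 < ((n-v).choose (M-v)) := Nat.choose_pos (by omega)
    have hid2 : (n.choose M) * (M.choose v) = (n.choose v) * ((n-v).choose (M-v)) :=
      Nat.choose_mul hvM
    have hstep : (ε/2) * (n.choose v : ℝ) ≤ (M.choose v : ℝ) * Copies.card := by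
      have hcMv : (0:ℝ) < ((n-v).choose (M-v) : ℝ) := by exact_mod_cast hchoosenvMv
      rw [← mul_le_mul_iff_of_pos_right hcMv]
      have r5 : (rich.card : ℝ) ≤ ((n-v).choose (M-v) : ℝ) * Copies.card := by
        exact_mod_cast hRleC
      have r6 : (n.choose M : ℝ) * (M.choose v : ℝ)
          = (n.choose v : ℝ) * ((n-v).choose (M-v) : ℝ) := by exact_mod_cast hid2
      calc (ε/2) * (n.choose v : ℝ) * (((n-v).choose (M-v) : ℕ) : ℝ)
          = (ε/2) * ((n.choose M : ℝ) * (M.choose v : ℝ)) := by rw [r6]; ring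
        _ ≤ (rich.card : ℝ) * (M.choose v : ℝ) := by
            have := mul_le_mul_of_nonneg_right hrichlow
              (show (0:ℝ) ≤ (M.choose v : ℝ) by positivity)
            linarith
        _ ≤ (((n-v).choose (M-v) : ℝ) * Copies.card) * (M.choose v : ℝ) :=
            mul_le_mul_of_nonneg_right r5 (by positivity)
        _ = (M.choose v : ℝ) * Copies.card * (((n-v).choose (M-v) : ℕ) : ℝ) := by ring
    have hnv : ((n:ℝ))^v ≤ 2^v * (v.factorial : ℝ) * (n.choose v : ℝ) := by
      have d1 : ((n+1-v : ℕ)^v : ℕ) ≤ n.descFactorial v := Nat.pow_sub_le_descFactorial n v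
      have d2 : (n.descFactorial v : ℝ) = (v.factorial : ℝ) * (n.choose v : ℝ) := by
        exact_mod_cast Nat.descFactorial_eq_factorial_mul_choose n v
      have d3 : ((n:ℝ)/2)^v ≤ ((n+1-v : ℕ) : ℝ)^v := by
        apply pow_le_pow_left₀ (by positivity)
        have : ((n+1-v : ℕ) : ℝ) = (n:ℝ) + 1 - v := by
          have hvn1 : v ≤ n + 1 := by omega
          push_cast [hvn1]
          ring
        rw [this]
        have : (v:ℝ) ≤ (n:ℝ)/2 := by
          have : 2*v ≤ n := by omega
          have := (Nat.cast_le (α := ℝ)).mpr this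
          push_cast at this
          linarith
        linarith
      have d4 : ((n+1-v : ℕ) : ℝ)^v ≤ (v.factorial : ℝ) * (n.choose v : ℝ) := by
        rw [← d2]
        exact_mod_cast d1
      calc ((n:ℝ))^v = 2^v * ((n:ℝ)/2)^v := by
            rw [← mul_pow]
            ring_nf
        _ ≤ 2^v * ((v.factorial : ℝ) * (n.choose v : ℝ)) := by
            apply mul_le_mul_of_nonneg_left (le_trans d3 d4) (by positivity)
        _ = 2^v * (v.factorial : ℝ) * (n.choose v : ℝ) := by ring
    have hCc : δ * (n:ℝ)^v ≤ (Copies.card : ℝ) := by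
      have hMv : (0:ℝ) < (M.choose v : ℝ) := by exact_mod_cast hMchoosev
      have hvf : (0:ℝ) < (v.factorial : ℝ) := by exact_mod_cast v.factorial_pos
      have h1 : δ * (n:ℝ)^v ≤ δ * (2^v * (v.factorial : ℝ) * (n.choose v : ℝ)) :=
        mul_le_mul_of_nonneg_left hnv (le_of_lt hδ)
      have h2 : δ * (2^v * (v.factorial : ℝ) * (n.choose v : ℝ))
          = (ε/2) * (n.choose v : ℝ) / (M.choose v : ℝ) := by
        rw [hδdef]
        field_simp
      have h3 : (ε/2) * (n.choose v : ℝ) / (M.choose v : ℝ) ≤ (Copies.card : ℝ) := by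
        rw [div_le_iff₀ hMv]
        linarith [hstep]
      linarith
    -- apply box theorem
    set eqv : F.V ≃ Fin v := Fintype.equivFin F.V with heqv
    set D := Copies.map ⟨fun f => f ∘ eqv.symm, by
      intro f g hfg
      funext u
      have := congrFun hfg (eqv u)
      simpa using this⟩ with hD
    have hDcard : D.card = Copies.card := Finset.card_map _
    obtain ⟨W, hWcard, hWsel⟩ := hbox n (by omega) D (by rw [hDcard]; exact hCc)
    set W' : F.V → Finset (Fin n) := fun u => W (eqv u) with hW'
    have hW'card : ∀ u, (W' u).card = t := fun u => hWcard _
    have hW'ne : ∀ u, (W' u).Nonempty := fun u =>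
      Finset.card_pos.mp (by rw [hW'card u]; omega)
    have hsel : ∀ h : F.V → Fin n, (∀ u, h u ∈ W' u) →
        Function.Injective h ∧ ∀ e ∈ F.edges, e.image h ∈ E := by
      intro h hh
      have hmem : h ∘ eqv.symm ∈ D := by
        apply hWsel
        intro i
        simpa [hW'] using hh (eqv.symm i)
      rw [hD, Finset.mem_map] at hmem
      obtain ⟨f, hfC, hfe⟩ := hmem
      have hfh : f = h := by
        funext u
        have := congrFun hfe (eqv u)
        change f (eqv.symm (eqv u)) = h (eqv.symm (eqv u)) at this
        simpa using this
      rw [hCopies, Finset.mem_filter] at hfC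
      exact hfh ▸ hfC.2
    -- construct the copy of the blowup
    set gB : F.V × Fin t → Fin n :=
      fun p => ((W' p.1).orderIsoOfFin (hW'card p.1) p.2 : Fin n) with hgB
    have hgBmem : ∀ p, gB p ∈ W' p.1 := fun p =>
      ((W' p.1).orderIsoOfFin (hW'card p.1) p.2).2
    have hginj : Function.Injective gB := by
      rintro ⟨u, i⟩ ⟨u', i'⟩ hpq
      by_cases hu : u = u'
      · subst hu
        have : ((W' u).orderIsoOfFin (hW'card u)) i
            = ((W' u).orderIsoOfFin (hW'card u)) i' := Subtype.ext hpq
        have := ((W' u).orderIsoOfFin (hW'card u)).injective this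
        rw [this]
      · exfalso
        set h : F.V → Fin n := fun w =>
          if w = u then gB (u,i) else if w = u' then gB (u',i')
          else (W' w).min' (hW'ne w) with hh
        have hhmem : ∀ w, h w ∈ W' w := by
          intro w
          by_cases h1 : w = u
          · subst h1
            simp only [hh, if_pos rfl]
            exact hgBmem (w, i)
          · by_cases h2 : w = u'
            · subst h2
              simp only [hh, if_neg h1, if_pos rfl]
              exact hgBmem (w, i')
            · simp only [hh, if_neg h1, if_neg h2]
              exact Finset.min'_mem _ _
        have hinj := (hsel h hhmem).1
        have heq2 : h u = h u' := by
          simp only [hh, if_pos rfl, if_neg (Ne.symm hu)]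
          exact hpq
        exact hu (hinj heq2)
    have hgedge : ∀ S ∈ (blowup F t).edges, S.image gB ∈ E := by
      intro S hS
      have hS' : S.image Prod.fst ∈ F.edges ∧ S.card = (S.image Prod.fst).card := by
        unfold blowup finsetsOf at hS
        have h2 := (Set.Finite.mem_toFinset (Set.toFinite {S : Finset (F.V × Fin t) |
          S.image Prod.fst ∈ F.edges ∧ S.card = (S.image Prod.fst).card})).mp hS
        exact h2
      have hfstinj := Finset.card_image_iff.mp hS'.2.symm
      set h : F.V → Fin n := fun u =>
        if hu : ∃ p ∈ S, p.1 = u then gB hu.choose else (W' u).min' (hW'ne u) with hh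
      have hhmem : ∀ u, h u ∈ W' u := by
        intro u
        by_cases hu : ∃ p ∈ S, p.1 = u
        · simp only [hh, dif_pos hu]
          have := hgBmem hu.choose
          rwa [hu.choose_spec.2] at this
        · simp only [hh, dif_neg hu]
          exact Finset.min'_mem _ _
      obtain ⟨hhinj, hhedge⟩ := hsel h hhmem
      have key : S.image gB = (S.image Prod.fst).image h := by
        erw [Finset.image_image]
        apply Finset.image_congr
        intro p hp
        have hpS : p ∈ S := hp
        have hex : ∃ q ∈ S, q.1 = p.1 := ⟨p, hpS, rfl⟩
        have h1 : h p.1 = gB hex.choose := by simp only [hh, dif_pos hex]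
        have hqp : hex.choose = p := hfstinj hex.choose_spec.1 hpS hex.choose_spec.2
        show gB p = h p.1
        rw [h1, hqp]
      rw [key]
      exact hhedge _ hS'.1
    exact hfree (blowup F t) rfl ⟨gB, hginj, hgedge⟩

end Support

/-- For every `k`-graph `F` and every `t ≥ 1`,
`π(B(F,t)) = π(F)`. -/
theorem turanDensity_blowup (k t : ℕ) (F : HGraph)
    (hF : F.IsUniform k) (ht : 1 ≤ t) :
    turanDensity₁ k (blowup F t) = turanDensity₁ k F := by
  apply le_antisymm
  · -- hard direction via supersaturation
    by_contra hlt
    push_neg at hlt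
    set ε := (turanDensity₁ k (blowup F t) - turanDensity₁ k F)/2 with hεdef
    have hε0 : 0 < ε := by rw [hεdef]; linarith
    obtain ⟨N, hN⟩ := main_bound k t F ht hε0
    have hπ0 : 0 ≤ turanDensity₁ k F := turanDensity_nonneg k {F}
    have hev : ∀ᶠ n in Filter.atTop,
        exRatio k {blowup F t} n ≤ turanDensity₁ k F + ε := by
      rw [Filter.eventually_atTop]
      refine ⟨N, fun n hn => ?_⟩
      unfold exRatio
      rcases Nat.eq_zero_or_pos (n.choose k) with h0 | hpos
      · rw [h0]
        simp only [Nat.cast_zero, div_zero]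
        positivity
      · rw [div_le_iff₀ (by exact_mod_cast hpos)]
        exact hN n hn
    have hle : turanDensity₁ k (blowup F t) ≤ turanDensity₁ k F + ε := by
      have := Filter.limsup_le_of_le
        (Filter.isCoboundedUnder_le_of_le Filter.atTop
          (fun n => exRatio_nonneg k {blowup F t} n)) hev
      exact this
    rw [hεdef] at hle
    linarith
  · -- easy direction : F-free graphs are blowup-free
    apply Filter.limsup_le_limsup
    · apply Filter.Eventually.of_forall
      intro n
      unfold exRatio
      rcases Nat.eq_zero_or_pos (n.choose k) with h0 | hpos
      · rw [h0]
        simp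
      · have hm : (exNum k n {F} : ℝ) ≤ (exNum k n {blowup F t} : ℝ) := by
          exact_mod_cast exNum_mono k n t ht F
        have hc : (0:ℝ) < (n.choose k : ℝ) := by exact_mod_cast hpos
        exact div_le_div_of_nonneg_right hm (le_of_lt hc)
    · exact Filter.isCoboundedUnder_le_of_le Filter.atTop
        (fun n => exRatio_nonneg k {F} n)
    · exact Filter.isBoundedUnder_of ⟨1, fun n => exRatio_le_one k {blowup F t} n⟩
end

section
/- Let s > k ≥ 3. The k-graph H obtained from a balanced complete (s-1)-partite k-graph on n vertices (whose edges are the k-sets with all vertices in distinct parts) by adding inside each of the s-1 parts a balanced complete k-partite k-graph contains no copy of GL^{(k)}(s,2). -/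
open Finset Filter Topology

/-! ### Auxiliary lemmas for `host_glFree` -/

lemma mem_finsetOf {V : Type} [Fintype V] [DecidableEq V] {s : Set V} {v : V} :
    v ∈ finsetOf s ↔ v ∈ s := (Set.toFinite s).mem_toFinset

lemma mem_finsetsOf {V : Type} [Fintype V] [DecidableEq V] {s : Set (Finset V)} {e : Finset V} :
    e ∈ finsetsOf s ↔ e ∈ s := (Set.toFinite s).mem_toFinset

/-- The row-1 vertex `v^e_{2j}` of `GL^{(k)}(s,2)`. -/
def w1V {k s : ℕ} (e : pairOf s) (j : Fin (k-1)) : glV k s 2 :=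
  Sum.inr (Sum.inl ⟨e, ⟨(⟨1, one_lt_two⟩, j), Or.inl one_ne_zero⟩⟩)

lemma w1V_injective {k s : ℕ} (e : pairOf s) : Function.Injective (w1V (k := k) (s := s) e) := by
  intro a b h
  simpa [w1V] using h

lemma glVPred_one_iff {k s : ℕ} (e : pairOf s) (j : Fin (k-1)) (v : glV k s 2) :
    glVPred k s 2 e 1 (j : ℕ) v ↔ v = w1V e j := by
  constructor
  · rintro (⟨⟨e', ⟨⟨i', j'⟩, hw⟩⟩, rfl, rfl, hi, hj'⟩ | ⟨h, -⟩ | ⟨h, -⟩)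
    · simp only [w1V, Sum.inr.injEq, Sum.inl.injEq, Prod.mk.injEq, Subtype.mk.injEq, true_and]
      exact ⟨Fin.ext hi, Fin.ext hj'⟩
    · exact absurd h one_ne_zero
    · exact absurd h one_ne_zero
  · rintro rfl
    exact Or.inl ⟨_, rfl, rfl, rfl, rfl⟩

lemma not_glVPred_zero_w1V {k s : ℕ} (e e' : pairOf s) (j : Fin (k-1)) {j' : ℕ} :
    ¬ glVPred k s 2 e' 0 j' (w1V e j) := by
  rintro (⟨w', hv, -, hi, -⟩ | ⟨-, -, hv⟩ | ⟨-, -, hv⟩)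
  · obtain rfl : w' = ⟨e, ⟨(⟨1, one_lt_two⟩, j), Or.inl one_ne_zero⟩⟩ :=
      (Sum.inl_injective (Sum.inr_injective hv)).symm
    exact absurd hi one_ne_zero
  · simp [w1V] at hv
  · simp [w1V] at hv


/-- The `k`-graph obtained from a balanced complete
`(s-1)`-partite `k`-graph (parts indexed by `Fin (s-1)`, each of size `k*q`)
by adding inside each part a balanced complete `k`-partite `k`-graph
(subparts indexed by `Fin k`, each of size `q`) contains no copy of
`GL^{(k)}(s,2)`. -/

theorem host_glFree (k s q : ℕ) (hk : 3 ≤ k) (hs : k < s) :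
    ¬ HasCopy (gl k s 2)
      (HGraph.mk (Fin (s-1) × Fin k × Fin q)
        (finsetsOf {S | S.card = k ∧
          ((S.image (fun v => v.1)).card = k ∨
           (∃ p, (∀ v ∈ S, v.1 = p) ∧ (S.image (fun v => v.2.1)).card = k))})) := by
  rintro ⟨f, finj, fedge⟩
  -- Pigeonhole: two of the `s` base vertices land in the same part.
  obtain ⟨a, b, hab, hgab⟩ := Fintype.exists_ne_map_eq_of_card_lt
    (fun i : Fin s => (f (Sum.inl i)).1)
    (by simp only [Fintype.card_fin]; omega)
  set p : Fin (s-1) := (f (Sum.inl a)).1 with hp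
  have he2 : ({a, b} : Finset (Fin s)).card = 2 := Finset.card_pair hab
  set e : pairOf s := ⟨{a, b}, he2⟩ with hedef
  have hlh : pairLow e ≠ pairHigh e :=
    ne_of_lt (Finset.min'_lt_max'_of_card _ (by rw [he2]; omega))
  have hmem2 : ∀ c ∈ ({a, b} : Finset (Fin s)), (f (Sum.inl c)).1 = p := by
    intro c hc
    rcases Finset.mem_insert.mp hc with h | h
    · rw [h]
    · rw [Finset.mem_singleton.mp h]; exact hgab.symm
  have hlow1 : (f (Sum.inl (pairLow e))).1 = p := hmem2 _ (Finset.min'_mem _ _)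
  have hhigh1 : (f (Sum.inl (pairHigh e))).1 = p := hmem2 _ (Finset.max'_mem _ _)
  -- the common row 0 of the ladder at `e`
  set R0 : Finset (glV k s 2) := finsetOf {v | ∃ j' < k-1, glVPred k s 2 e 0 j' v} with hR0
  have hlowR0 : Sum.inl (pairLow e) ∈ R0 :=
    mem_finsetOf.mpr ⟨k-3, by omega, Or.inr (Or.inl ⟨rfl, rfl, rfl⟩)⟩
  have hhighR0 : Sum.inl (pairHigh e) ∈ R0 :=
    mem_finsetOf.mpr ⟨k-2, by omega, Or.inr (Or.inr ⟨rfl, rfl, rfl⟩)⟩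
  have hw1R0 : ∀ j : Fin (k-1), w1V e j ∉ R0 := by
    intro j hmem
    obtain ⟨j', -, h⟩ := mem_finsetOf.mp hmem
    exact not_glVPred_zero_w1V e e j h
  -- the first-layer ladder edges are `insert (w1V e j) R0`
  have hS1 : ∀ j : Fin (k-1), insert (w1V e j) R0 ∈ (gl k s 2).edges := by
    intro j
    have hEq : finsetOf {v | (∃ j' < k-1, glVPred k s 2 e 0 j' v) ∨
        glVPred k s 2 e (0+1) (j : ℕ) v} = insert (w1V e j) R0 := by
      ext v
      rw [mem_finsetOf, Finset.mem_insert, hR0, mem_finsetOf]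
      simp only [Set.mem_setOf_eq, Nat.zero_add, glVPred_one_iff e j v]
      exact or_comm
    have hmem : finsetOf {v | (∃ j' < k-1, glVPred k s 2 e 0 j' v) ∨
        glVPred k s 2 e (0+1) (j : ℕ) v} ∈ (gl k s 2).edges :=
      mem_finsetsOf.mpr (Set.mem_union_left _ ⟨e, 0, (j : ℕ), by omega, j.isLt, rfl⟩)
    rwa [hEq] at hmem
  -- host-side information for every edge of `gl`
  have hostmem : ∀ S ∈ (gl k s 2).edges,
      (S.image f).card = k ∧
      (((S.image f).image (fun v => v.1)).card = k ∨
        ∃ p', (∀ v ∈ S.image f, v.1 = p') ∧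
          ((S.image f).image (fun v => v.2.1)).card = k) := by
    intro S hS
    exact mem_finsetsOf.mp (fedge S hS)
  set u : Fin (k-1) → Fin (s-1) × Fin k × Fin q := fun j => f (w1V e j) with hu
  set B : Finset (Fin (s-1) × Fin k × Fin q) := R0.image f with hB
  set A : Finset (Fin k) := B.image (fun v => v.2.1) with hA
  have huB : ∀ j : Fin (k-1), u j ∉ B := by
    intro j hj
    obtain ⟨w, hwR0, hwf⟩ := Finset.mem_image.mp hj
    exact hw1R0 j (finj hwf ▸ hwR0)
  have key : ∀ j : Fin (k-1), (u j).1 = p ∧ (u j).2.1 ∉ A ∧ A.card + 1 = k := by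
    intro j
    obtain ⟨hcardk, hcases⟩ := hostmem _ (hS1 j)
    have himg : (insert (w1V e j) R0).image f = insert (u j) B := by
      simp only [hu, hB]
      exact Finset.image_insert _ _ _
    rw [himg] at hcardk hcases
    have hx : f (Sum.inl (pairLow e)) ∈ insert (u j) B :=
      Finset.mem_insert_of_mem (by rw [hB]; exact Finset.mem_image_of_mem f hlowR0)
    have hy : f (Sum.inl (pairHigh e)) ∈ insert (u j) B :=
      Finset.mem_insert_of_mem (by rw [hB]; exact Finset.mem_image_of_mem f hhighR0)
    have hxy : f (Sum.inl (pairLow e)) ≠ f (Sum.inl (pairHigh e)) := by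
      intro h
      exact hlh (Sum.inl_injective (finj h))
    rcases hcases with hcross | ⟨p', hall, hsnd⟩
    · exfalso
      have hinj : Set.InjOn (fun v : Fin (s-1) × Fin k × Fin q => v.1)
          ↑(insert (u j) B) :=
        Finset.card_image_iff.mp (hcross.trans hcardk.symm)
      exact hxy (hinj (Finset.mem_coe.mpr hx) (Finset.mem_coe.mpr hy)
        (hlow1.trans hhigh1.symm))
    · have hpp : p' = p := (hall _ hx).symm.trans hlow1
      have hinj : Set.InjOn (fun v : Fin (s-1) × Fin k × Fin q => v.2.1)
          ↑(insert (u j) B) :=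
        Finset.card_image_iff.mp (hsnd.trans hcardk.symm)
      have huA : (u j).2.1 ∉ A := by
        intro hmem
        rw [hA] at hmem
        obtain ⟨v, hvB, hveq⟩ := Finset.mem_image.mp hmem
        have hvu : v = u j :=
          hinj (Finset.mem_coe.mpr (Finset.mem_insert_of_mem hvB))
            (Finset.mem_coe.mpr (Finset.mem_insert_self _ _)) hveq
        exact huB j (hvu ▸ hvB)
      refine ⟨hpp ▸ hall _ (Finset.mem_insert_self _ _), huA, ?_⟩
      have hsimg : ((insert (u j) B).image (fun v => v.2.1)) = insert ((u j).2.1) A := by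
        rw [Finset.image_insert, hA]
      rw [hsimg, Finset.card_insert_of_notMem huA] at hsnd
      omega
  -- the two row-1 vertices have the same color
  have hk2 : 1 < k - 1 := by omega
  set j0 : Fin (k-1) := ⟨0, by omega⟩ with hj0
  set j1 : Fin (k-1) := ⟨1, hk2⟩ with hj1
  have hAcard : A.card + 1 = k := (key j0).2.2
  have hcompl : (Finset.univ \ A).card = 1 := by
    rw [Finset.card_sdiff_of_subset (Finset.subset_univ A), Finset.card_univ, Fintype.card_fin]
    omega
  have hsame : (u j0).2.1 = (u j1).2.1 := by
    have h0 : (u j0).2.1 ∈ Finset.univ \ A :=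
      Finset.mem_sdiff.mpr ⟨Finset.mem_univ _, (key j0).2.1⟩
    have h1 : (u j1).2.1 ∈ Finset.univ \ A :=
      Finset.mem_sdiff.mpr ⟨Finset.mem_univ _, (key j1).2.1⟩
    exact Finset.card_le_one.mp hcompl.le _ h0 _ h1
  -- the terminal edge of the ladder gives the contradiction
  set T : Finset (glV k s 2) :=
    finsetOf {v | (∃ j' < k-1, glVPred k s 2 e (2-1) j' v) ∨ v = Sum.inr (Sum.inr e)} with hT
  have hTedge : T ∈ (gl k s 2).edges :=
    mem_finsetsOf.mpr (Set.mem_union_right _ ⟨e, rfl⟩)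
  have hw1T : ∀ j : Fin (k-1), w1V e j ∈ T := by
    intro j
    exact mem_finsetOf.mpr (Or.inl ⟨(j : ℕ), j.isLt, (glVPred_one_iff e j _).mpr rfl⟩)
  have hu01 : u j0 ≠ u j1 := by
    intro h
    have := w1V_injective e (finj h)
    rw [hj0, hj1] at this
    exact absurd (congrArg Fin.val this) (by simp)
  have h0T : u j0 ∈ T.image f := Finset.mem_image_of_mem f (hw1T j0)
  have h1T : u j1 ∈ T.image f := Finset.mem_image_of_mem f (hw1T j1)
  obtain ⟨hTcard, hTcases⟩ := hostmem T hTedge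
  rcases hTcases with hcross | ⟨p', hall, hsnd⟩
  · have hinj : Set.InjOn (fun v : Fin (s-1) × Fin k × Fin q => v.1) ↑(T.image f) :=
      Finset.card_image_iff.mp (hcross.trans hTcard.symm)
    exact hu01 (hinj (Finset.mem_coe.mpr h0T) (Finset.mem_coe.mpr h1T)
      (((key j0).1).trans ((key j1).1).symm))
  · have hinj : Set.InjOn (fun v : Fin (s-1) × Fin k × Fin q => v.2.1) ↑(T.image f) :=
      Finset.card_image_iff.mp (hsnd.trans hTcard.symm)
    exact hu01 (hinj (Finset.mem_coe.mpr h0T) (Finset.mem_coe.mpr h1T) hsame)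
end
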